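/- Let {h_α : α ∈ 𝒜_∞} be a Haar-like system on A ∈ Σ⁺ in L₁ = L₁(Ω,Σ,μ), and let δ > 0. Then there exist scalars a_α ∈ ℝ with |a_α| ≤ δ for all α ∈ 𝒜_∞ and a sign f supported on A such that the partial sums ∑_{k=0}^{n} ∑_{α ∈ 𝒜ₖ} a_α h_α converge to f in L₁-norm as n → ∞. -/

import Mathlib

/-!
Take `m` with `1/m ≤ δ` and run, along every branch of the tree, the simple random walk on `ℤ`
started at `0` and absorbed at `±m` (`true` is a step up). With `a_α = 1/m` while the walk at `α`
is not yet absorbed and `a_α = 0` afterwards, the `n`-th partial sum telescopes to the step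
function equal to `walk(β)/m` on each `A_β` of level `n + 1`. It agrees with the sign
`χ_{A \ B} - χ_B`, where `B` is the union of the `A_β` on which the walk has hit `-m`, except on
the unabsorbed part of that level, where the two differ by at most `2`. The unabsorbed part
shrinks geometrically, because from every unabsorbed node the path of `2m` up-steps is absorbed.
The halves `A \ B` and `B` have equal measure since every `h_α` has mean zero, hence so does the
`L₁`-limit.
-/

open MeasureTheory ENNReal Set Filter

noncomputable section

variable {Ω : Type*} [MeasurableSpace Ω]

/-- `f ∈ L_p(μ)` is a *sign supported on* `A`: `f = χ_{B₁} - χ_{B₂}` where `B₁, B₂`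
form a partition of `A` into two measurable subsets of equal measure. -/
def IsSignOn (μ : Measure Ω) [IsFiniteMeasure μ] (p : ℝ≥0∞) [Fact (1 ≤ p)]
    (f : Lp ℝ p μ) (A : Set Ω) : Prop :=
  ∃ (B₁ B₂ : Set Ω) (h₁ : MeasurableSet B₁) (h₂ : MeasurableSet B₂),
    Disjoint B₁ B₂ ∧ B₁ ∪ B₂ = A ∧ μ B₁ = μ B₂ ∧
    f = indicatorConstLp p h₁ (measure_ne_top μ B₁) (1 : ℝ) -
        indicatorConstLp p h₂ (measure_ne_top μ B₂) (1 : ℝ)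

/-- `T : L_p(μ) → X` is *PP-narrow*: for every measurable `A` of nonzero measure and
every `ε > 0` there is a sign `f` supported on `A` with `‖T f‖ ≤ ε`. -/
def PPNarrow (μ : Measure Ω) [IsFiniteMeasure μ] (p : ℝ≥0∞) [Fact (1 ≤ p)]
    {X : Type*} [NormedAddCommGroup X] [NormedSpace ℝ X]
    (T : Lp ℝ p μ →L[ℝ] X) : Prop :=
  ∀ A : Set Ω, MeasurableSet A → 0 < μ A →
    ∀ ε : ℝ, 0 < ε → ∃ f : Lp ℝ p μ, IsSignOn μ p f A ∧ ‖T f‖ ≤ ε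

/-- A *tree of subsets* on `A`, indexed by finite ±1-tuples (modelled as `List Bool`,
`true ↔ 1`, `false ↔ -1`): `t [] = A` and for every `α` the sets `t (α ++ [true])` and
`t (α ++ [false])` form a partition of `t α` into two measurable subsets of equal measure. -/
structure IsTreeOn (μ : Measure Ω) (A : Set Ω) (t : List Bool → Set Ω) : Prop where
  root : t [] = A
  meas : ∀ α, MeasurableSet (t α)
  disj : ∀ α, Disjoint (t (α ++ [true])) (t (α ++ [false]))
  union : ∀ α, t (α ++ [true]) ∪ t (α ++ [false]) = t α
  eqmeas : ∀ α, μ (t (α ++ [true])) = μ (t (α ++ [false]))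

/-- The *Haar-like system* corresponding to a tree of subsets:
`h_α = χ_{A_{α,1}} - χ_{A_{α,-1}}`, as an element of `L_p(μ)`. -/
def haarFn (μ : Measure Ω) [IsFiniteMeasure μ] (p : ℝ≥0∞) [Fact (1 ≤ p)]
    (t : List Bool → Set Ω) (ht : ∀ α, MeasurableSet (t α)) (α : List Bool) : Lp ℝ p μ :=
  indicatorConstLp p (ht (α ++ [true])) (measure_ne_top μ _) (1 : ℝ) -
  indicatorConstLp p (ht (α ++ [false])) (measure_ne_top μ _) (1 : ℝ)

/-- The `n`-th level `𝒜ₙ = {-1,1}ⁿ` of the index set, as a finset of `List Bool`. -/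
def levelFinset (k : ℕ) : Finset (List Bool) :=
  (Finset.univ : Finset (Fin k → Bool)).image (fun g => List.ofFn g)

def walkStep (m : ℕ) (x : ℤ) (b : Bool) : ℤ :=
  if (m : ℤ) ≤ |x| then x else if b then x + 1 else x - 1

def absorbedWalk (m : ℕ) (β : List Bool) : ℤ :=
  β.foldl (walkStep m) 0

lemma absorbedWalk_append_singleton (m : ℕ) (β : List Bool) (b : Bool) :
    absorbedWalk m (β ++ [b]) = walkStep m (absorbedWalk m β) b := by
  simp [absorbedWalk]

lemma foldl_walkStep_of_le_abs {m : ℕ} {x : ℤ} (hx : (m : ℤ) ≤ |x|) (l : List Bool) :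
    l.foldl (walkStep m) x = x := by
  induction l with
  | nil => rfl
  | cons b l ih => simp [walkStep, hx, ih]

lemma absorbedWalk_append_of_le_abs {m : ℕ} {β : List Bool}
    (hβ : (m : ℤ) ≤ |absorbedWalk m β|) (l : List Bool) :
    absorbedWalk m (β ++ l) = absorbedWalk m β := by
  rw [absorbedWalk, List.foldl_append]
  exact foldl_walkStep_of_le_abs hβ l

lemma abs_absorbedWalk_lt_of_append {m : ℕ} {β l : List Bool}
    (h : |absorbedWalk m (β ++ l)| < m) : |absorbedWalk m β| < m := by
  by_contra! hβ
  rw [absorbedWalk_append_of_le_abs hβ] at h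
  omega

lemma abs_absorbedWalk_le (m : ℕ) (β : List Bool) : |absorbedWalk m β| ≤ m := by
  induction β using List.reverseRecOn with
  | nil => simp [absorbedWalk]
  | append_singleton β b ih =>
    rw [absorbedWalk_append_singleton, walkStep]
    split_ifs with habs
    · exact ih
    all_goals rw [not_le, abs_lt] at habs; rw [abs_le]; omega

lemma foldl_walkStep_replicate_true {m : ℕ} {x : ℤ} (h₁ : -(m : ℤ) < x) (h₂ : x ≤ m) (k : ℕ) :
    (List.replicate k true).foldl (walkStep m) x = min (m : ℤ) (x + k) := by
  induction k generalizing x with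
  | zero => simp; omega
  | succ k ih =>
    rw [List.replicate_succ, List.foldl_cons]
    by_cases hx : x = m
    · rw [foldl_walkStep_of_le_abs (by simp [walkStep, hx])]
      simp [walkStep, hx]
      omega
    · have hstep : walkStep m x true = x + 1 := by
        rw [walkStep, if_neg (by rw [not_le, abs_lt]; omega), if_pos rfl]
      rw [hstep, ih (by omega) (by omega)]
      omega

lemma absorbedWalk_append_replicate_true {m : ℕ} {β : List Bool}
    (hβ : |absorbedWalk m β| < m) :
    absorbedWalk m (β ++ List.replicate (2 * m) true) = m := by
  rw [abs_lt] at hβ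
  rw [absorbedWalk, List.foldl_append, ← absorbedWalk,
    foldl_walkStep_replicate_true hβ.1 hβ.2.le]
  omega

lemma mem_levelFinset {n : ℕ} {β : List Bool} : β ∈ levelFinset n ↔ β.length = n := by
  simp only [levelFinset, Finset.mem_image, Finset.mem_univ, true_and]
  constructor
  · rintro ⟨g, rfl⟩
    exact List.length_ofFn
  · rintro rfl
    exact ⟨β.get, List.ofFn_get β⟩

lemma card_levelFinset (n : ℕ) : (levelFinset n).card = 2 ^ n := by
  rw [levelFinset, Finset.card_image_of_injective _ List.ofFn_injective]
  simp

lemma sum_levelFinset_succ {M : Type*} [AddCommMonoid M] (n : ℕ) (F : List Bool → M) :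
    ∑ β ∈ levelFinset (n + 1), F β =
      ∑ α ∈ levelFinset n, (F (α ++ [true]) + F (α ++ [false])) := by
  have himage : levelFinset (n + 1) =
      (levelFinset n ×ˢ Finset.univ).image fun p : List Bool × Bool => p.1 ++ [p.2] := by
    ext β
    simp only [mem_levelFinset, Finset.mem_image, Finset.mem_product, Finset.mem_univ, and_true,
      Prod.exists]
    constructor
    · intro h
      obtain ⟨α, b, rfl⟩ : ∃ α b, β = α ++ [b] := by
        rcases List.eq_nil_or_concat β with rfl | ⟨α, b, rfl⟩
        · simp at h
        · exact ⟨α, b, List.concat_eq_append⟩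
      exact ⟨α, b, by simpa using h, rfl⟩
    · rintro ⟨α, b, rfl, rfl⟩
      simp
  rw [himage, Finset.sum_image, Finset.sum_product]
  · simp [add_comm]
  · rintro ⟨α, b⟩ - ⟨α', b'⟩ - h
    simpa using h

def unabsorbed (m n : ℕ) : Finset (List Bool) :=
  (levelFinset n).filter fun β => |absorbedWalk m β| < m

lemma card_unabsorbed_add_le (m n : ℕ) :
    (unabsorbed m (n + 2 * m)).card ≤ (2 ^ (2 * m) - 1) * (unabsorbed m n).card := by
  have hrep : List.replicate (2 * m) true ∈ levelFinset (2 * m) := by simp [mem_levelFinset]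
  calc (unabsorbed m (n + 2 * m)).card
      ≤ (unabsorbed m n ×ˢ (levelFinset (2 * m)).erase (List.replicate (2 * m) true)).card := by
        refine Finset.card_le_card_of_injOn (fun γ => (γ.take n, γ.drop n)) ?_ ?_
        · intro γ hγ
          obtain ⟨hlen, habs⟩ := Finset.mem_filter.1 hγ
          rw [mem_levelFinset] at hlen
          rw [← List.take_append_drop n γ] at habs
          simp only [Finset.coe_product, Set.mem_prod, Finset.mem_coe, unabsorbed,
            Finset.mem_filter, mem_levelFinset, Finset.mem_erase]
          refine ⟨⟨by simp [hlen], abs_absorbedWalk_lt_of_append habs⟩, fun h => ?_,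
            by simp [hlen]⟩
          rw [h, absorbedWalk_append_replicate_true (abs_absorbedWalk_lt_of_append habs)] at habs
          simp at habs
        · intro γ _ γ' _ h
          simp only [Prod.mk.injEq] at h
          rw [← List.take_append_drop n γ, ← List.take_append_drop n γ', h.1, h.2]
    _ = (2 ^ (2 * m) - 1) * (unabsorbed m n).card := by
        rw [Finset.card_product, Finset.card_erase_of_mem hrep, card_levelFinset, mul_comm]

namespace IsTreeOn

variable {μ : Measure Ω} {A : Set Ω} {t : List Bool → Set Ω}

lemma measurableSet_root (ht : IsTreeOn μ A t) : MeasurableSet A :=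
  ht.root ▸ ht.meas []

lemma append_subset (ht : IsTreeOn μ A t) (α l : List Bool) : t (α ++ l) ⊆ t α := by
  induction l using List.reverseRecOn with
  | nil => simp
  | append_singleton l b ih =>
    refine Subset.trans ?_ ih
    rw [← List.append_assoc, ← ht.union (α ++ l)]
    cases b
    · exact subset_union_right
    · exact subset_union_left

lemma subset_root (ht : IsTreeOn μ A t) (β : List Bool) : t β ⊆ A := by
  simpa [ht.root] using ht.append_subset [] β

lemma disjoint_of_length_eq (ht : IsTreeOn μ A t) {β γ : List Bool}
    (hlen : β.length = γ.length) (hne : β ≠ γ) : Disjoint (t β) (t γ) := by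
  induction β using List.reverseRecOn generalizing γ with
  | nil => exact absurd (List.length_eq_zero_iff.1 hlen.symm).symm hne
  | append_singleton α b ih =>
    obtain ⟨α', c, rfl⟩ : ∃ α' c, γ = α' ++ [c] := by
      rcases List.eq_nil_or_concat γ with rfl | ⟨α', c, rfl⟩
      · simp at hlen
      · exact ⟨α', c, List.concat_eq_append⟩
    by_cases hα : α = α'
    · subst hα
      have hbc : b ≠ c := by simpa using hne
      cases b <;> cases c
      all_goals first | exact absurd rfl hbc | exact ht.disj α | exact (ht.disj α).symm
    · exact (ih (by simpa using hlen) hα).mono (ht.append_subset α [b]) (ht.append_subset α' [c])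

lemma prefix_or_prefix_of_mem (ht : IsTreeOn μ A t) {β γ : List Bool} {ω : Ω}
    (hβ : ω ∈ t β) (hγ : ω ∈ t γ) : β <+: γ ∨ γ <+: β := by
  wlog hle : β.length ≤ γ.length generalizing β γ
  · exact (this hγ hβ (le_of_not_ge hle)).symm
  have hγ' : ω ∈ t (γ.take β.length) :=
    ht.append_subset _ (γ.drop β.length) (by rwa [List.take_append_drop])
  have hβγ : β = γ.take β.length := by
    by_contra hne
    exact Set.disjoint_left.1 (ht.disjoint_of_length_eq (by simp [hle]) hne) hβ hγ'
  exact Or.inl (hβγ ▸ List.take_prefix _ _)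

lemma exists_mem_level (ht : IsTreeOn μ A t) {ω : Ω} (hω : ω ∈ A) (n : ℕ) :
    ∃ β ∈ levelFinset n, ω ∈ t β := by
  induction n with
  | zero => exact ⟨[], by simp [mem_levelFinset], by rwa [ht.root]⟩
  | succ n ih =>
    obtain ⟨β, hβ, hωβ⟩ := ih
    rw [mem_levelFinset] at hβ
    rw [← ht.union β] at hωβ
    rcases hωβ with hωβ | hωβ
    · exact ⟨β ++ [true], by simp [mem_levelFinset, hβ], hωβ⟩
    · exact ⟨β ++ [false], by simp [mem_levelFinset, hβ], hωβ⟩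

lemma sum_mul_indicator_eq (ht : IsTreeOn μ A t) {n : ℕ} {β₀ : List Bool} {ω : Ω}
    (hβ₀ : β₀ ∈ levelFinset n) (hω : ω ∈ t β₀) (g : List Bool → ℝ) :
    ∑ β ∈ levelFinset n, g β * (t β).indicator (fun _ => (1 : ℝ)) ω = g β₀ := by
  rw [Finset.sum_eq_single_of_mem β₀ hβ₀ fun β hβ hne => ?_, indicator_of_mem hω, mul_one]
  have hdisj := ht.disjoint_of_length_eq
    ((mem_levelFinset.1 hβ).trans (mem_levelFinset.1 hβ₀).symm) hne
  rw [indicator_of_notMem (Set.disjoint_right.1 hdisj hω), mul_zero]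

variable [IsFiniteMeasure μ]

lemma measureReal_append_singleton (ht : IsTreeOn μ A t) (α : List Bool) (b : Bool) :
    μ.real (t (α ++ [b])) = μ.real (t α) / 2 := by
  have hsum := measureReal_union (μ := μ) (ht.disj α) (ht.meas _)
  rw [ht.union α] at hsum
  have heq : μ.real (t (α ++ [true])) = μ.real (t (α ++ [false])) := by
    simp only [measureReal_def, ht.eqmeas α]
  cases b <;> linarith

lemma measureReal_eq (ht : IsTreeOn μ A t) (β : List Bool) :
    μ.real (t β) = μ.real A / 2 ^ β.length := by
  induction β using List.reverseRecOn with
  | nil => simp [ht.root]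
  | append_singleton α b ih =>
    rw [ht.measureReal_append_singleton, ih, List.length_append, List.length_singleton, pow_succ,
      div_div]

lemma measureReal_biUnion_level (ht : IsTreeOn μ A t) {n : ℕ} {s : Finset (List Bool)}
    (hs : s ⊆ levelFinset n) :
    μ.real (⋃ β ∈ s, t β) = s.card * (μ.real A / 2 ^ n) := by
  have hdisj : (s : Set (List Bool)).PairwiseDisjoint t := fun β hβ γ hγ hne =>
    ht.disjoint_of_length_eq
      ((mem_levelFinset.1 (hs hβ)).trans (mem_levelFinset.1 (hs hγ)).symm) hne
  rw [measureReal_biUnion_finset hdisj fun β _ => ht.meas β, Finset.sum_congr rfl fun β hβ => by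
    rw [ht.measureReal_eq, mem_levelFinset.1 (hs hβ)]]
  simp

end IsTreeOn

section Lp

variable (μ : Measure Ω) [IsFiniteMeasure μ] (p : ℝ≥0∞)

def signLp [Fact (1 ≤ p)] {B₁ B₂ : Set Ω} (h₁ : MeasurableSet B₁) (h₂ : MeasurableSet B₂) :
    Lp ℝ p μ :=
  indicatorConstLp p h₁ (measure_ne_top μ B₁) 1 - indicatorConstLp p h₂ (measure_ne_top μ B₂) 1

variable {μ p}

lemma coeFn_signLp [Fact (1 ≤ p)] {B₁ B₂ : Set Ω} (h₁ : MeasurableSet B₁)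
    (h₂ : MeasurableSet B₂) :
    ⇑(signLp μ p h₁ h₂) =ᵐ[μ] fun ω =>
      B₁.indicator (fun _ => (1 : ℝ)) ω - B₂.indicator (fun _ => (1 : ℝ)) ω := by
  filter_upwards [Lp.coeFn_sub (indicatorConstLp p h₁ (measure_ne_top μ B₁) (1 : ℝ)) _,
    indicatorConstLp_coeFn (hs := h₁) (hμs := measure_ne_top μ B₁) (c := (1 : ℝ)),
    indicatorConstLp_coeFn (hs := h₂) (hμs := measure_ne_top μ B₂) (c := (1 : ℝ))]
    with ω hsub h₁ h₂
  rw [signLp, hsub, Pi.sub_apply, h₁, h₂]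

lemma coeFn_sum_smul_indicatorConstLp [Fact (1 ≤ p)] {ι : Type*} (s : Finset ι) (c : ι → ℝ)
    {T : ι → Set Ω} (hT : ∀ i, MeasurableSet (T i)) :
    ⇑(∑ i ∈ s, c i • indicatorConstLp p (hT i) (measure_ne_top μ _) (1 : ℝ)) =ᵐ[μ]
      fun ω => ∑ i ∈ s, c i * (T i).indicator (fun _ => (1 : ℝ)) ω := by
  have hterm : ∀ᵐ ω ∂μ, ∀ i ∈ s, (c i • indicatorConstLp p (hT i) (measure_ne_top μ _) 1) ω =
      c i * (T i).indicator (fun _ => (1 : ℝ)) ω := by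
    refine (eventually_all_finset s).2 fun i _ => ?_
    filter_upwards [Lp.coeFn_smul (c i) (indicatorConstLp p (hT i) (measure_ne_top μ _) (1 : ℝ)),
      indicatorConstLp_coeFn (hs := hT i) (hμs := measure_ne_top μ _) (c := (1 : ℝ))]
      with ω hsmul hind
    rw [hsmul, Pi.smul_apply, hind, smul_eq_mul]
  filter_upwards [Lp.coeFn_fun_finsetSum s
    fun i => c i • indicatorConstLp p (hT i) (measure_ne_top μ _) (1 : ℝ), hterm]
    with ω hsum hterm
  rw [hsum]
  exact Finset.sum_congr rfl hterm

lemma integralCLM_signLp {B₁ B₂ : Set Ω} (h₁ : MeasurableSet B₁) (h₂ : MeasurableSet B₂) :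
    L1.integralCLM (signLp μ 1 h₁ h₂) = μ.real B₁ - μ.real B₂ := by
  rw [signLp, map_sub, ← L1.integral_eq, ← L1.integral_eq, L1.integral_eq_integral,
    L1.integral_eq_integral, integral_indicatorConstLp, integral_indicatorConstLp,
    smul_eq_mul, smul_eq_mul, mul_one, mul_one]

variable {A : Set Ω} {t : List Bool → Set Ω}

variable (p) in
lemma IsTreeOn.indicatorConstLp_eq_add (ht : IsTreeOn μ A t) (α : List Bool) :
    indicatorConstLp p (ht.meas α) (measure_ne_top μ _) (1 : ℝ) =
      indicatorConstLp p (ht.meas (α ++ [true])) (measure_ne_top μ _) 1 +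
        indicatorConstLp p (ht.meas (α ++ [false])) (measure_ne_top μ _) 1 := by
  rw [← indicatorConstLp_disjoint_union _ _ _ _ (ht.disj α)]
  congr 1
  exact (ht.union α).symm

variable (p) in
theorem IsTreeOn.sum_smul_haarFn_eq [Fact (1 ≤ p)] (ht : IsTreeOn μ A t) {c g : List Bool → ℝ}
    (hg : g [] = 0) (hT : ∀ α, g (α ++ [true]) = g α + c α)
    (hF : ∀ α, g (α ++ [false]) = g α - c α) (n : ℕ) :
    ∑ k ∈ Finset.range n, ∑ α ∈ levelFinset k, c α • haarFn μ p t ht.meas α =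
      ∑ β ∈ levelFinset n, g β • indicatorConstLp p (ht.meas β) (measure_ne_top μ _) 1 := by
  induction n with
  | zero => simp [levelFinset, hg]
  | succ n ih =>
    rw [Finset.sum_range_succ, ih, sum_levelFinset_succ, ← Finset.sum_add_distrib]
    refine Finset.sum_congr rfl fun α _ => ?_
    rw [ht.indicatorConstLp_eq_add p α, haarFn, hT, hF]
    module

lemma IsTreeOn.measure_eq_of_tendsto_signLp (ht : IsTreeOn μ A t) {a : List Bool → ℝ}
    {B₁ B₂ : Set Ω} {h₁ : MeasurableSet B₁} {h₂ : MeasurableSet B₂}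
    (hlim : Tendsto (fun n => ∑ k ∈ Finset.range (n + 1),
      ∑ α ∈ levelFinset k, a α • haarFn μ 1 t ht.meas α) atTop (nhds (signLp μ 1 h₁ h₂))) :
    μ B₁ = μ B₂ := by
  have hhaar (α : List Bool) : L1.integralCLM (haarFn μ 1 t ht.meas α) = 0 := by
    rw [haarFn, ← signLp, integralCLM_signLp, measureReal_def, measureReal_def, ht.eqmeas,
      sub_self]
  have hmean := (L1.integralCLM.continuous.tendsto _).comp hlim
  simp only [Function.comp_def, map_sum, map_smul, hhaar, smul_zero, Finset.sum_const_zero,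
    integralCLM_signLp] at hmean
  rw [← measureReal_eq_measureReal_iff, ← sub_eq_zero]
  exact tendsto_nhds_unique hmean tendsto_const_nhds

end Lp

def haarCoeff (m : ℕ) (α : List Bool) : ℝ :=
  if |absorbedWalk m α| < m then (m : ℝ)⁻¹ else 0

lemma abs_haarCoeff_le (m : ℕ) (α : List Bool) : |haarCoeff m α| ≤ (m : ℝ)⁻¹ := by
  unfold haarCoeff
  split_ifs <;> simp

lemma absorbedWalk_append_true_div (m : ℕ) (α : List Bool) :
    (absorbedWalk m (α ++ [true]) : ℝ) / m = absorbedWalk m α / m + haarCoeff m α := by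
  rw [absorbedWalk_append_singleton, walkStep, haarCoeff]
  by_cases h : (m : ℤ) ≤ |absorbedWalk m α|
  · simp [h, not_lt.2 h]
  · simp [h, not_le.1 h, add_div]

lemma absorbedWalk_append_false_div (m : ℕ) (α : List Bool) :
    (absorbedWalk m (α ++ [false]) : ℝ) / m = absorbedWalk m α / m - haarCoeff m α := by
  rw [absorbedWalk_append_singleton, walkStep, haarCoeff]
  by_cases h : (m : ℤ) ≤ |absorbedWalk m α|
  · simp [h, not_lt.2 h]
  · simp [h, not_le.1 h, sub_div]

def negAbsorbedSet (m : ℕ) (t : List Bool → Set Ω) : Set Ω :=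
  ⋃ β ∈ {β | absorbedWalk m β = -m}, t β

def unabsorbedSet (m : ℕ) (t : List Bool → Set Ω) (n : ℕ) : Set Ω :=
  ⋃ β ∈ unabsorbed m n, t β

namespace IsTreeOn

variable {μ : Measure Ω} {A : Set Ω} {t : List Bool → Set Ω} (ht : IsTreeOn μ A t) (m : ℕ)
include ht

lemma measurableSet_negAbsorbedSet : MeasurableSet (negAbsorbedSet m t) :=
  .biUnion (to_countable _) fun β _ => ht.meas β

lemma measurableSet_unabsorbedSet (n : ℕ) : MeasurableSet (unabsorbedSet m t n) :=
  Finset.measurableSet_biUnion _ fun β _ => ht.meas β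

lemma negAbsorbedSet_subset : negAbsorbedSet m t ⊆ A :=
  iUnion₂_subset fun β _ => ht.subset_root β

lemma unabsorbedSet_antitone : Antitone (unabsorbedSet m t) := by
  refine antitone_nat_of_succ_le fun n ω hω => ?_
  simp only [unabsorbedSet, unabsorbed, mem_iUnion, Finset.mem_filter, mem_levelFinset] at hω ⊢
  obtain ⟨β, ⟨hlen, habs⟩, hωβ⟩ := hω
  rw [← List.take_append_drop n β] at habs hωβ
  exact ⟨β.take n, ⟨by simp [hlen], abs_absorbedWalk_lt_of_append habs⟩,
    ht.append_subset _ _ hωβ⟩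

lemma mem_negAbsorbedSet_iff {β : List Bool} {ω : Ω} (hω : ω ∈ t β)
    (hβ : (m : ℤ) ≤ |absorbedWalk m β|) :
    ω ∈ negAbsorbedSet m t ↔ absorbedWalk m β = -m := by
  refine ⟨fun h => ?_, fun h => mem_biUnion h hω⟩
  obtain ⟨γ, hγ, hωγ⟩ := mem_iUnion₂.1 h
  rcases ht.prefix_or_prefix_of_mem hω hωγ with ⟨l, rfl⟩ | ⟨l, rfl⟩
  · rwa [← absorbedWalk_append_of_le_abs hβ l]
  · rwa [absorbedWalk_append_of_le_abs (by rw [show absorbedWalk m γ = -m from hγ]; simp) l]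

lemma indicator_sub_indicator_eq_of_absorbed (hm : 0 < m) {β : List Bool} {ω : Ω}
    (hω : ω ∈ t β) (hβ : (m : ℤ) ≤ |absorbedWalk m β|) :
    (A \ negAbsorbedSet m t).indicator (fun _ => (1 : ℝ)) ω -
      (negAbsorbedSet m t).indicator (fun _ => (1 : ℝ)) ω = absorbedWalk m β / m := by
  have hωA := ht.subset_root β hω
  have hm' : (m : ℝ) ≠ 0 := by positivity
  rcases abs_eq (Int.natCast_nonneg m) |>.1 (le_antisymm (abs_absorbedWalk_le m β) hβ)
    with hpos | hneg
  · have hωB : ω ∉ negAbsorbedSet m t := by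
      rw [ht.mem_negAbsorbedSet_iff m hω hβ]
      omega
    rw [indicator_of_mem (show ω ∈ A \ _ from ⟨hωA, hωB⟩), indicator_of_notMem hωB, hpos]
    simp [hm']
  · have hωB : ω ∈ negAbsorbedSet m t := (ht.mem_negAbsorbedSet_iff m hω hβ).2 hneg
    rw [indicator_of_notMem fun h => h.2 hωB, indicator_of_mem hωB, hneg]
    simp [hm']

lemma abs_sum_sub_indicator_sub_indicator_le (hm : 0 < m) (n : ℕ) (ω : Ω) :
    |∑ β ∈ levelFinset n, (absorbedWalk m β : ℝ) / m * (t β).indicator (fun _ => (1 : ℝ)) ω -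
      ((A \ negAbsorbedSet m t).indicator (fun _ => (1 : ℝ)) ω -
        (negAbsorbedSet m t).indicator (fun _ => (1 : ℝ)) ω)| ≤
      (unabsorbedSet m t n).indicator (fun _ => (2 : ℝ)) ω := by
  by_cases hωA : ω ∈ A
  · obtain ⟨β, hβ, hωβ⟩ := ht.exists_mem_level hωA n
    rw [ht.sum_mul_indicator_eq hβ hωβ]
    rcases lt_or_ge |absorbedWalk m β| m with hlt | hge
    · have hωU : ω ∈ unabsorbedSet m t n := mem_biUnion (Finset.mem_filter.2 ⟨hβ, hlt⟩) hωβ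
      have hwalk : |(absorbedWalk m β : ℝ) / m| ≤ 1 := by
        rw [abs_div, Nat.abs_cast, div_le_one (by positivity)]
        exact_mod_cast abs_absorbedWalk_le m β
      have hsign : |(A \ negAbsorbedSet m t).indicator (fun _ => (1 : ℝ)) ω -
          (negAbsorbedSet m t).indicator (fun _ => (1 : ℝ)) ω| ≤ 1 := by
        by_cases hωB : ω ∈ negAbsorbedSet m t <;> simp [hωA, hωB]
      rw [indicator_of_mem hωU]
      exact (abs_sub _ _).trans (by linarith)
    · rw [ht.indicator_sub_indicator_eq_of_absorbed m hm hωβ hge, sub_self, abs_zero]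
      exact indicator_nonneg (fun _ _ => zero_le_two) ω
  · have hnot (s : Set Ω) (hs : s ⊆ A) : s.indicator (fun _ => (1 : ℝ)) ω = 0 :=
      indicator_of_notMem (fun h => hωA (hs h)) _
    rw [Finset.sum_eq_zero fun β _ => by rw [hnot _ (ht.subset_root β), mul_zero],
      hnot _ sdiff_subset, hnot _ (ht.negAbsorbedSet_subset m)]
    simpa using indicator_nonneg (fun _ _ => zero_le_two) ω

end IsTreeOn

lemma tendsto_zero_of_antitone_of_le_mul {u : ℕ → ℝ} (hu : ∀ n, 0 ≤ u n) (hanti : Antitone u)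
    {M : ℕ} (hM : M ≠ 0) {q : ℝ} (hq₀ : 0 ≤ q) (hq₁ : q < 1) (h : ∀ n, u (n + M) ≤ q * u n) :
    Tendsto u atTop (nhds 0) := by
  have hblock (k : ℕ) : u (k * M) ≤ q ^ k * u 0 := by
    induction k with
    | zero => simp
    | succ k ih =>
      calc u ((k + 1) * M) = u (k * M + M) := by rw [add_one_mul]
        _ ≤ q * u (k * M) := h _
        _ ≤ q * (q ^ k * u 0) := mul_le_mul_of_nonneg_left ih hq₀
        _ = q ^ (k + 1) * u 0 := by ring
  refine squeeze_zero hu (fun n => (hanti (Nat.div_mul_le_self n M)).trans (hblock _)) ?_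
  simpa using ((tendsto_pow_atTop_nhds_zero_of_lt_one hq₀ hq₁).comp
    (Nat.tendsto_div_const_atTop hM)).mul_const (u 0)

namespace IsTreeOn

variable {μ : Measure Ω} [IsFiniteMeasure μ] {A : Set Ω} {t : List Bool → Set Ω}
  (ht : IsTreeOn μ A t) (m : ℕ)
include ht

lemma measureReal_unabsorbedSet_add_le (n : ℕ) :
    μ.real (unabsorbedSet m t (n + 2 * m)) ≤
      (1 - 1 / 2 ^ (2 * m)) * μ.real (unabsorbedSet m t n) := by
  have hsub (n : ℕ) : unabsorbed m n ⊆ levelFinset n := Finset.filter_subset _ _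
  rw [unabsorbedSet, unabsorbedSet, ht.measureReal_biUnion_level (hsub _),
    ht.measureReal_biUnion_level (hsub _)]
  have hcard : ((unabsorbed m (n + 2 * m)).card : ℝ) ≤
      (2 ^ (2 * m) - 1) * (unabsorbed m n).card := by
    calc ((unabsorbed m (n + 2 * m)).card : ℝ)
        ≤ (((2 ^ (2 * m) - 1) * (unabsorbed m n).card : ℕ) : ℝ) := by
          exact_mod_cast card_unabsorbed_add_le m n
      _ = _ := by push_cast [Nat.cast_sub Nat.one_le_two_pow]; ring
  calc ((unabsorbed m (n + 2 * m)).card : ℝ) * (μ.real A / 2 ^ (n + 2 * m))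
      ≤ (2 ^ (2 * m) - 1) * (unabsorbed m n).card * (μ.real A / 2 ^ (n + 2 * m)) :=
        mul_le_mul_of_nonneg_right hcard (by positivity)
    _ = (1 - 1 / 2 ^ (2 * m)) * ((unabsorbed m n).card * (μ.real A / 2 ^ n)) := by
        rw [pow_add]
        field_simp

lemma tendsto_measureReal_unabsorbedSet (hm : 0 < m) :
    Tendsto (fun n => μ.real (unabsorbedSet m t n)) atTop (nhds 0) :=
  tendsto_zero_of_antitone_of_le_mul (fun _ => measureReal_nonneg)
    (fun _ _ hle => measureReal_mono (ht.unabsorbedSet_antitone m hle)) (by omega)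
    (sub_nonneg.2 (div_le_one_of_le₀ (one_le_pow₀ one_le_two) (by positivity)))
    (sub_lt_self 1 (by positivity))
    (ht.measureReal_unabsorbedSet_add_le m)

lemma norm_sum_smul_indicatorConstLp_sub_signLp_le (hm : 0 < m) (n : ℕ) :
    ‖∑ β ∈ levelFinset n, ((absorbedWalk m β : ℝ) / m) •
        indicatorConstLp 1 (ht.meas β) (measure_ne_top μ _) (1 : ℝ) -
      signLp μ 1 (ht.measurableSet_root.diff (ht.measurableSet_negAbsorbedSet m))
        (ht.measurableSet_negAbsorbedSet m)‖ ≤ 2 * μ.real (unabsorbedSet m t n) := by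
  calc _ ≤ ‖indicatorConstLp 1 (ht.measurableSet_unabsorbedSet m n) (measure_ne_top μ _)
        (2 : ℝ)‖ := by
        refine Lp.norm_le_norm_of_ae_le ?_
        filter_upwards [Lp.coeFn_sub (E := ℝ) (p := 1) (μ := μ) _ _,
          coeFn_sum_smul_indicatorConstLp (p := 1) _ _ ht.meas,
          coeFn_signLp (p := 1) _ _, indicatorConstLp_coeFn (c := (2 : ℝ))]
          with ω hsub hsum hsign hU
        rw [hsub, Pi.sub_apply, hsum, hsign, hU, Real.norm_eq_abs, Real.norm_eq_abs]
        exact (ht.abs_sum_sub_indicator_sub_indicator_le m hm n ω).trans (le_abs_self _)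
    _ = 2 * μ.real (unabsorbedSet m t n) := by
        rw [norm_indicatorConstLp one_ne_zero one_ne_top]
        simp

theorem tendsto_sum_haarCoeff_smul_haarFn (hm : 0 < m) :
    Tendsto (fun n => ∑ k ∈ Finset.range (n + 1),
        ∑ α ∈ levelFinset k, haarCoeff m α • haarFn μ 1 t ht.meas α) atTop
      (nhds (signLp μ 1 (ht.measurableSet_root.diff (ht.measurableSet_negAbsorbedSet m))
        (ht.measurableSet_negAbsorbedSet m))) := by
  simp_rw [ht.sum_smul_haarFn_eq 1 (g := fun β => (absorbedWalk m β : ℝ) / m)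
    (by simp [absorbedWalk]) (absorbedWalk_append_true_div m) (absorbedWalk_append_false_div m)]
  rw [tendsto_iff_norm_sub_tendsto_zero]
  refine squeeze_zero (fun _ => norm_nonneg _)
    (fun n => ht.norm_sum_smul_indicatorConstLp_sub_signLp_le m hm (n + 1)) ?_
  simpa using
    ((ht.tendsto_measureReal_unabsorbedSet m hm).comp (tendsto_add_atTop_nat 1)).const_mul 2

end IsTreeOn

theorem sign_in_closed_span_of_haar_general
    (μ : Measure Ω) [IsProbabilityMeasure μ]
    (A : Set Ω)
    (t : List Bool → Set Ω) (ht : IsTreeOn μ A t)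
    (δ : ℝ) (hδ : 0 < δ) :
    ∃ a : List Bool → ℝ, (∀ α, |a α| ≤ δ) ∧
      ∃ f : Lp ℝ 1 μ, IsSignOn μ 1 f A ∧
        Filter.Tendsto
          (fun n => ∑ k ∈ Finset.range (n + 1),
            ∑ α ∈ levelFinset k, a α • haarFn μ 1 t ht.meas α)
          Filter.atTop (nhds f) := by
  obtain ⟨m, hmδ⟩ := exists_nat_one_div_lt hδ
  have hlim := ht.tendsto_sum_haarCoeff_smul_haarFn (m + 1) m.succ_pos
  refine ⟨haarCoeff (m + 1), fun α => (abs_haarCoeff_le _ α).trans ?_, _,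
    ⟨_, _, _, _, disjoint_sdiff_left, sdiff_union_of_subset (ht.negAbsorbedSet_subset _),
      ht.measure_eq_of_tendsto_signLp hlim, rfl⟩, hlim⟩
  simpa using hmδ.le

/-- Lemma 4.2. For every Haar-like system `(h_α)` on `A` in `L₁(μ)`
and every `δ > 0` there are scalars `(a_α)` with `|a_α| ≤ δ` and a sign `f` supported
on `A` such that the partial sums `∑_{k=0}^n ∑_{α ∈ 𝒜ₖ} a_α h_α` converge to `f` in
`L₁`-norm. -/
theorem sign_in_closed_span_of_haar
    (μ : Measure Ω) [IsProbabilityMeasure μ] [NullSingletonClass μ]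
    (A : Set Ω) (hA : MeasurableSet A) (hA0 : 0 < μ A)
    (t : List Bool → Set Ω) (ht : IsTreeOn μ A t)
    (δ : ℝ) (hδ : 0 < δ) :
    ∃ a : List Bool → ℝ, (∀ α, |a α| ≤ δ) ∧
      ∃ f : Lp ℝ 1 μ, IsSignOn μ 1 f A ∧
        Filter.Tendsto
          (fun n => ∑ k ∈ Finset.range (n + 1),
            ∑ α ∈ levelFinset k, a α • haarFn μ 1 t ht.meas α)
          Filter.atTop (nhds f) :=
  sign_in_closed_span_of_haar_general μ A t ht δ hδ
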